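/- arXiv:hep-th/0504085 — 4 statements merged into one kernel-verified Lean document; each statement's English description precedes it below -/
import Mathlib

section
/- Let H be a commutative Hopf algebra over ℂ that is positively graded and connected, and let φ: H → ℂ((z)) be a ℂ-algebra homomorphism. Then the normalized Birkhoff factorization of φ is unique: if (φ₋, φ₊) and (ψ₋, ψ₊) are two pairs of ℂ-algebra homomorphisms H → ℂ((z)) such that φ₋ and ψ₋ take values in ℂ ⊕ z⁻¹ℂ[z⁻¹] with z⁰-coefficient of φ₋(x) and of ψ₋(x) equal to ε(x) for all x, φ₊ and ψ₊ take values in ℂ[[z]], and φ₊ = φ₋ ⋆ φ and ψ₊ = ψ₋ ⋆ φ, then φ₋ = ψ₋ and φ₊ = ψ₊. -/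
/-!
Statement 1 (Connes–Kreimer): uniqueness of the normalized Birkhoff factorization of a
character of a positively graded connected commutative Hopf algebra over ℂ with values
in the field ℂ((z)) of formal Laurent series.
-/

open TensorProduct

noncomputable section

/-- Convolution product `φ ⋆ ψ = m_A ∘ (φ ⊗ ψ) ∘ Δ` of linear maps from a Hopf algebra
into a commutative algebra. -/
def conv {H A : Type} [CommRing H] [HopfAlgebra ℂ H] [CommRing A] [Algebra ℂ A]
    (f g : H →ₗ[ℂ] A) : H →ₗ[ℂ] A :=
  LinearMap.mul' ℂ A ∘ₗ TensorProduct.map f g ∘ₗ Coalgebra.comul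

section ConvLemmas

variable {H A : Type} [CommRing H] [HopfAlgebra ℂ H] [CommRing A] [Algebra ℂ A]

lemma conv_apply {ι : Type*} (f g : H →ₗ[ℂ] A) (x : H) (r : Coalgebra.Repr ℂ x ι) :
    conv f g x = ∑ i ∈ r.index, f (r.left i) * g (r.right i) := by
  simp only [conv, LinearMap.comp_apply, ← r.eq, map_sum, TensorProduct.map_tmul,
    LinearMap.mul'_apply]

/-- The unit of the convolution algebra. -/
def convOne : H →ₗ[ℂ] A := (Algebra.linearMap ℂ A) ∘ₗ Coalgebra.counit

lemma convOne_apply (x : H) :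
    (convOne : H →ₗ[ℂ] A) x = algebraMap ℂ A (Coalgebra.counit x) := rfl

lemma one_conv (f : H →ₗ[ℂ] A) : conv convOne f = f := by
  ext x
  have r := Coalgebra.Repr.arbitrary ℂ x
  have h := Coalgebra.sum_counit_tmul_eq (R := ℂ) r
  apply_fun (TensorProduct.lid ℂ H) at h
  simp only [map_sum, TensorProduct.lid_tmul, one_smul] at h
  rw [conv_apply _ _ x r]
  calc ∑ i ∈ r.index, (convOne : H →ₗ[ℂ] A) (r.left i) * f (r.right i)
      = ∑ i ∈ r.index, Coalgebra.counit (R := ℂ) (r.left i) • f (r.right i) := by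
        refine Finset.sum_congr rfl fun i _ => ?_
        rw [convOne_apply, Algebra.smul_def]
    _ = f (∑ i ∈ r.index, Coalgebra.counit (R := ℂ) (r.left i) • r.right i) := by
        simp [map_sum, map_smul]
    _ = f x := by rw [h]

lemma conv_one (f : H →ₗ[ℂ] A) : conv f convOne = f := by
  ext x
  have r := Coalgebra.Repr.arbitrary ℂ x
  have h := Coalgebra.sum_tmul_counit_eq (R := ℂ) r
  apply_fun (TensorProduct.rid ℂ H) at h
  simp only [map_sum, TensorProduct.rid_tmul, one_smul] at h
  rw [conv_apply _ _ x r]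
  calc ∑ i ∈ r.index, f (r.left i) * (convOne : H →ₗ[ℂ] A) (r.right i)
      = ∑ i ∈ r.index, Coalgebra.counit (R := ℂ) (r.right i) • f (r.left i) := by
        refine Finset.sum_congr rfl fun i _ => ?_
        rw [convOne_apply, Algebra.smul_def, mul_comm]
    _ = f (∑ i ∈ r.index, Coalgebra.counit (R := ℂ) (r.right i) • r.left i) := by
        simp [map_sum, map_smul]
    _ = f x := by rw [h]

lemma conv_assoc (f g h : H →ₗ[ℂ] A) : conv (conv f g) h = conv f (conv g h) := by
  ext x
  have r := Coalgebra.Repr.arbitrary ℂ x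
  have a₁ : ∀ i, Coalgebra.Repr ℂ (r.left i) (H × H) := fun i => Coalgebra.Repr.arbitrary ℂ _
  have a₂ : ∀ i, Coalgebra.Repr ℂ (r.right i) (H × H) := fun i => Coalgebra.Repr.arbitrary ℂ _
  have key := Coalgebra.sum_map_tmul_tmul_eq (f := f) (g := g) (h := h) x
    (repr := r) (a₁ := a₁) (a₂ := a₂)
  apply_fun (LinearMap.mul' ℂ A ∘ₗ (LinearMap.mul' ℂ A).lTensor A) at key
  simp only [map_sum, LinearMap.comp_apply, LinearMap.lTensor_tmul,
    LinearMap.mul'_apply] at key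
  have l : conv (conv f g) h x
      = ∑ i ∈ r.index, ∑ j ∈ (a₁ i).index,
          f ((a₁ i).left j) * (g ((a₁ i).right j) * h (r.right i)) := by
    rw [conv_apply _ _ x r]
    refine Finset.sum_congr rfl fun i _ => ?_
    rw [conv_apply _ _ _ (a₁ i), Finset.sum_mul]
    exact Finset.sum_congr rfl fun j _ => mul_assoc _ _ _
  have rr : conv f (conv g h) x
      = ∑ i ∈ r.index, ∑ j ∈ (a₂ i).index,
          f (r.left i) * (g ((a₂ i).left j) * h ((a₂ i).right j)) := by
    rw [conv_apply _ _ x r]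
    refine Finset.sum_congr rfl fun i _ => ?_
    rw [conv_apply _ _ _ (a₂ i), Finset.mul_sum]
  rw [l, rr, ← key]

lemma conv_antipode (χ : H →ₐ[ℂ] A) :
    conv χ.toLinearMap (χ.toLinearMap ∘ₗ HopfAlgebra.antipode (R := ℂ)) = convOne := by
  ext x
  have r := Coalgebra.Repr.arbitrary ℂ x
  have h := HopfAlgebra.sum_mul_antipode_eq_algebraMap_counit (R := ℂ) r
  rw [conv_apply _ _ x r, convOne_apply]
  have key : ∑ i ∈ r.index, χ (r.left i) * χ (HopfAlgebra.antipode (R := ℂ) (r.right i))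
      = χ ((algebraMap ℂ H) (Coalgebra.counit x)) := by
    rw [← h, map_sum]; simp [map_mul]
  simp only [LinearMap.comp_apply, AlgHom.toLinearMap_apply]
  rw [key, AlgHom.commutes]

lemma antipode_conv (χ : H →ₐ[ℂ] A) :
    conv (χ.toLinearMap ∘ₗ HopfAlgebra.antipode (R := ℂ)) χ.toLinearMap = convOne := by
  ext x
  have r := Coalgebra.Repr.arbitrary ℂ x
  have h := HopfAlgebra.sum_antipode_mul_eq_algebraMap_counit (R := ℂ) r
  rw [conv_apply _ _ x r, convOne_apply]
  have key : ∑ i ∈ r.index, χ (HopfAlgebra.antipode (R := ℂ) (r.left i)) * χ (r.right i)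
      = χ ((algebraMap ℂ H) (Coalgebra.counit x)) := by
    rw [← h, map_sum]; simp [map_mul]
  simp only [LinearMap.comp_apply, AlgHom.toLinearMap_apply]
  rw [key, AlgHom.commutes]

end ConvLemmas

section HahnLemmas

lemma ls_coeff_sum {ι : Type*} (s : Finset ι) (f : ι → LaurentSeries ℂ) (n : ℤ) :
    (∑ i ∈ s, f i).coeff n = ∑ i ∈ s, (f i).coeff n :=
  map_sum (HahnSeries.coeff.addMonoidHom n) f s

lemma mul_coeff_zero_of_pos {f g : LaurentSeries ℂ}
    (hf : ∀ n : ℤ, 0 < n → f.coeff n = 0) (hg : ∀ n : ℤ, 0 < n → g.coeff n = 0)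
    {n : ℤ} (hn : 0 < n) : (f * g).coeff n = 0 := by
  by_contra h
  have hmem : n ∈ (f * g).support := h
  obtain ⟨a, ha, b, hb, hab⟩ := HahnSeries.support_mul_subset hmem
  have ha' : a ≤ 0 := by by_contra hc; exact ha (hf a (by omega))
  have hb' : b ≤ 0 := by by_contra hc; exact hb (hg b (by omega))
  have hab' : a + b = n := hab
  omega

lemma mul_coeff_zero_of_neg {f g : LaurentSeries ℂ}
    (hf : ∀ n : ℤ, n < 0 → f.coeff n = 0) (hg : ∀ n : ℤ, n < 0 → g.coeff n = 0)
    {n : ℤ} (hn : n < 0) : (f * g).coeff n = 0 := by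
  by_contra h
  have hmem : n ∈ (f * g).support := h
  obtain ⟨a, ha, b, hb, hab⟩ := HahnSeries.support_mul_subset hmem
  have ha' : 0 ≤ a := by by_contra hc; exact ha (hf a (by omega))
  have hb' : 0 ≤ b := by by_contra hc; exact hb (hg b (by omega))
  have hab' : a + b = n := hab
  omega

lemma mul_coeff_zero_eq {f g : LaurentSeries ℂ}
    (hf : ∀ n : ℤ, 0 < n → f.coeff n = 0) (hg : ∀ n : ℤ, 0 < n → g.coeff n = 0) :
    (f * g).coeff 0 = f.coeff 0 * g.coeff 0 := by
  rw [HahnSeries.coeff_mul]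
  rw [Finset.sum_eq_single ((0 : ℤ), (0 : ℤ))]
  · intro b hb hne
    rw [Finset.mem_addAntidiagonal] at hb
    obtain ⟨h1, h2, h3⟩ := hb
    have hb1 : b.1 ≤ 0 := by by_contra hc; exact h1 (hf b.1 (by omega))
    have hb2 : b.2 ≤ 0 := by by_contra hc; exact h2 (hg b.2 (by omega))
    exact absurd (Prod.ext (by omega) (by omega)) hne
  · intro hnotmem
    rw [Finset.mem_addAntidiagonal] at hnotmem
    push_neg at hnotmem
    by_cases h0 : (0 : ℤ) ∈ f.support
    · by_cases h0' : (0 : ℤ) ∈ g.support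
      · exact absurd (add_zero 0) (hnotmem h0 h0')
      · rw [HahnSeries.mem_support, not_not] at h0'
        rw [h0', mul_zero]
    · rw [HahnSeries.mem_support, not_not] at h0
      rw [h0, zero_mul]

lemma ls_algebraMap_coeff (c : ℂ) (n : ℤ) :
    (algebraMap ℂ (LaurentSeries ℂ) c).coeff n = if n = 0 then c else 0 := by
  rw [HahnSeries.algebraMap_apply', ← PowerSeries.C_eq_algebraMap,
    HahnSeries.ofPowerSeries_C, HahnSeries.C_apply, HahnSeries.coeff_single]
  simp

end HahnLemmas

/-- **Uniqueness of the Birkhoff factorization.**  If `(φ₋, φ₊)` and `(ψ₋, ψ₊)` are two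
normalized Birkhoff factorizations of the same character `φ : H → ℂ((z))` — i.e. the
negative parts take values in `ℂ ⊕ z⁻¹ℂ[z⁻¹]` with `z⁰`-coefficient given by the counit,
the positive parts take values in `ℂ[[z]]`, and `φ₊ = φ₋ ⋆ φ`, `ψ₊ = ψ₋ ⋆ φ` — then
`φ₋ = ψ₋` and `φ₊ = ψ₊`. -/
theorem birkhoff_factorization_unique
    {H : Type} [CommRing H] [HopfAlgebra ℂ H]
    (𝒜 : ℕ → Submodule ℂ H)
    (hinternal : DirectSum.IsInternal 𝒜)
    (hmul : ∀ (p q : ℕ) (x y : H), x ∈ 𝒜 p → y ∈ 𝒜 q → x * y ∈ 𝒜 (p + q))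
    (hcomul : ∀ (n : ℕ) (x : H), x ∈ 𝒜 n →
      Coalgebra.comul (R := ℂ) x ∈ ⨆ (p : ℕ) (_ : p ≤ n),
        LinearMap.range (TensorProduct.map (𝒜 p).subtype (𝒜 (n - p)).subtype))
    (hanti : ∀ (n : ℕ) (x : H), x ∈ 𝒜 n → HopfAlgebra.antipode (R := ℂ) x ∈ 𝒜 n)
    (hconn : 𝒜 0 = Submodule.span ℂ {(1 : H)})
    (φ φm φp ψm ψp : H →ₐ[ℂ] LaurentSeries ℂ)
    (hφm_neg : ∀ (x : H) (n : ℤ), 0 < n → (φm x).coeff n = 0)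
    (hφm_zero : ∀ x : H, (φm x).coeff 0 = Coalgebra.counit (R := ℂ) x)
    (hψm_neg : ∀ (x : H) (n : ℤ), 0 < n → (ψm x).coeff n = 0)
    (hψm_zero : ∀ x : H, (ψm x).coeff 0 = Coalgebra.counit (R := ℂ) x)
    (hφp_pos : ∀ (x : H) (n : ℤ), n < 0 → (φp x).coeff n = 0)
    (hψp_pos : ∀ (x : H) (n : ℤ), n < 0 → (ψp x).coeff n = 0)
    (hφfact : φp.toLinearMap = conv φm.toLinearMap φ.toLinearMap)
    (hψfact : ψp.toLinearMap = conv ψm.toLinearMap φ.toLinearMap) :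
    φm = ψm ∧ φp = ψp := by
  have h2 : conv (φm.toLinearMap ∘ₗ HopfAlgebra.antipode (R := ℂ)) φm.toLinearMap
      = convOne := antipode_conv φm
  have h5 : conv φp.toLinearMap (φp.toLinearMap ∘ₗ HopfAlgebra.antipode (R := ℂ))
      = convOne := conv_antipode φp
  -- η := φ ⋆ φp⁻¹ is a right convolution inverse of φm, hence equals φm⁻¹ = φm ∘ S
  have hη1 : conv φm.toLinearMap
      (conv φ.toLinearMap (φp.toLinearMap ∘ₗ HopfAlgebra.antipode (R := ℂ))) = convOne := by
    rw [← conv_assoc, ← hφfact, h5]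
  have hη2 : conv φ.toLinearMap (φp.toLinearMap ∘ₗ HopfAlgebra.antipode (R := ℂ))
      = φm.toLinearMap ∘ₗ HopfAlgebra.antipode (R := ℂ) := by
    calc conv φ.toLinearMap (φp.toLinearMap ∘ₗ HopfAlgebra.antipode (R := ℂ))
        = conv convOne (conv φ.toLinearMap
            (φp.toLinearMap ∘ₗ HopfAlgebra.antipode (R := ℂ))) := (one_conv _).symm
      _ = conv (conv (φm.toLinearMap ∘ₗ HopfAlgebra.antipode (R := ℂ)) φm.toLinearMap)
            (conv φ.toLinearMap (φp.toLinearMap ∘ₗ HopfAlgebra.antipode (R := ℂ))) := by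
          rw [h2]
      _ = conv (φm.toLinearMap ∘ₗ HopfAlgebra.antipode (R := ℂ))
            (conv φm.toLinearMap (conv φ.toLinearMap
              (φp.toLinearMap ∘ₗ HopfAlgebra.antipode (R := ℂ)))) := conv_assoc _ _ _
      _ = conv (φm.toLinearMap ∘ₗ HopfAlgebra.antipode (R := ℂ)) convOne := by rw [hη1]
      _ = φm.toLinearMap ∘ₗ HopfAlgebra.antipode (R := ℂ) := conv_one _
  -- θ := ψm ⋆ φm⁻¹, which also equals ψp ⋆ φp⁻¹
  have hθalt : conv ψp.toLinearMap (φp.toLinearMap ∘ₗ HopfAlgebra.antipode (R := ℂ))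
      = conv ψm.toLinearMap (φm.toLinearMap ∘ₗ HopfAlgebra.antipode (R := ℂ)) := by
    rw [hψfact, conv_assoc, hη2]
  -- coefficient computations
  have hθ_pos : ∀ (x : H) (n : ℤ), 0 < n →
      ((conv ψm.toLinearMap (φm.toLinearMap ∘ₗ HopfAlgebra.antipode (R := ℂ))) x).coeff n
        = 0 := by
    intro x n hn
    rw [conv_apply _ _ x (Coalgebra.Repr.arbitrary ℂ x), ls_coeff_sum]
    refine Finset.sum_eq_zero fun i _ => ?_
    simp only [LinearMap.comp_apply, AlgHom.toLinearMap_apply]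
    exact mul_coeff_zero_of_pos (fun m hm => hψm_neg _ m hm)
      (fun m hm => hφm_neg _ m hm) hn
  have hθ_neg : ∀ (x : H) (n : ℤ), n < 0 →
      ((conv ψm.toLinearMap (φm.toLinearMap ∘ₗ HopfAlgebra.antipode (R := ℂ))) x).coeff n
        = 0 := by
    intro x n hn
    rw [← hθalt, conv_apply _ _ x (Coalgebra.Repr.arbitrary ℂ x), ls_coeff_sum]
    refine Finset.sum_eq_zero fun i _ => ?_
    simp only [LinearMap.comp_apply, AlgHom.toLinearMap_apply]
    exact mul_coeff_zero_of_neg (fun m hm => hψp_pos _ m hm)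
      (fun m hm => hφp_pos _ m hm) hn
  have hθ_zero : ∀ x : H,
      ((conv ψm.toLinearMap (φm.toLinearMap ∘ₗ HopfAlgebra.antipode (R := ℂ))) x).coeff 0
        = Coalgebra.counit (R := ℂ) x := by
    intro x
    have r := Coalgebra.Repr.arbitrary ℂ x
    rw [conv_apply _ _ x r, ls_coeff_sum]
    have e1 : ∀ i ∈ r.index,
        (ψm.toLinearMap (r.left i) *
          (φm.toLinearMap ∘ₗ HopfAlgebra.antipode (R := ℂ)) (r.right i)).coeff 0
          = Coalgebra.counit (R := ℂ) (r.left i) *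
            Coalgebra.counit (R := ℂ) (HopfAlgebra.antipode (R := ℂ) (r.right i)) := by
      intro i _
      simp only [LinearMap.comp_apply, AlgHom.toLinearMap_apply]
      rw [mul_coeff_zero_eq (fun m hm => hψm_neg _ m hm) (fun m hm => hφm_neg _ m hm),
        hψm_zero, hφm_zero]
    rw [Finset.sum_congr rfl e1]
    have h := HopfAlgebra.sum_mul_antipode_eq_algebraMap_counit (R := ℂ) r
    apply_fun (Bialgebra.counitAlgHom ℂ H) at h
    rw [map_sum] at h
    simp only [map_mul, Bialgebra.counitAlgHom_apply, AlgHom.commutes,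
      Algebra.algebraMap_self_apply] at h
    exact h
  -- hence θ = convOne
  have hθ : conv ψm.toLinearMap (φm.toLinearMap ∘ₗ HopfAlgebra.antipode (R := ℂ))
      = convOne := by
    refine DFunLike.ext _ _ fun x => ?_
    refine HahnSeries.ext (funext fun n => ?_)
    rw [convOne_apply, ls_algebraMap_coeff]
    rcases lt_trichotomy n 0 with h | h | h
    · rw [hθ_neg x n h, if_neg (by omega)]
    · rw [h, hθ_zero x, if_pos rfl]
    · rw [hθ_pos x n h, if_neg (by omega)]
  -- conclude ψm = φm
  have hm : ψm.toLinearMap = φm.toLinearMap := by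
    calc ψm.toLinearMap = conv ψm.toLinearMap convOne := (conv_one _).symm
      _ = conv ψm.toLinearMap
            (conv (φm.toLinearMap ∘ₗ HopfAlgebra.antipode (R := ℂ)) φm.toLinearMap) := by
          rw [h2]
      _ = conv (conv ψm.toLinearMap (φm.toLinearMap ∘ₗ HopfAlgebra.antipode (R := ℂ)))
            φm.toLinearMap := (conv_assoc _ _ _).symm
      _ = conv convOne φm.toLinearMap := by rw [hθ]
      _ = φm.toLinearMap := one_conv _
  have hmeq : φm = ψm :=
    AlgHom.ext fun x => (DFunLike.congr_fun hm x).symm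
  refine ⟨hmeq, ?_⟩
  have hp : φp.toLinearMap = ψp.toLinearMap := by
    rw [hφfact, hψfact, hm]
  exact AlgHom.ext fun x => DFunLike.congr_fun hp x

end
end

section
/- Let H be a commutative Hopf algebra over ℂ that is positively graded and connected, let φ: H → ℂ((z)) be a ℂ-algebra homomorphism, and let φ₋ be the algebra homomorphism defined by the recursion φ₋(1) = 1 and φ₋(x) = −T( φ(x) + Σ φ₋(x′) φ(x″) ) for homogeneous x of positive degree, where Δ(x) = x ⊗ 1 + 1 ⊗ x + Σ x′ ⊗ x″ with x′, x″ of strictly lower positive degree. Define φ₊(x) = φ(x) + φ₋(x) + Σ φ₋(x′) φ(x″) for such x, and φ₊(1) = 1. Then φ₊ = φ₋ ⋆ φ, φ₊ is a ℂ-algebra homomorphism, and φ₊ takes values in the ring ℂ[[z]] of formal power series (i.e., the renormalized values are finite at z = 0). -/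
/-!
Statement 3 (Connes–Kreimer / BPHZ): the renormalized character
`φ₊(x) = φ(x) + φ₋(x) + Σ φ₋(x′) φ(x″)` equals the convolution `φ₋ ⋆ φ`, is an algebra
homomorphism, and takes values in the ring `ℂ[[z]]` of formal power series (the
renormalized values are finite at `z = 0`).
-/

open TensorProduct

noncomputable section

/-- Minimal subtraction: the `ℂ`-linear projection `T` of `ℂ((z))` onto the pole part
`z⁻¹ℂ[z⁻¹]` along `ℂ[[z]]`. -/
def polePart (f : LaurentSeries ℂ) : LaurentSeries ℂ :=
  { coeff := fun n => if n < 0 then f.coeff n else 0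
    isPWO_support' := f.isPWO_support'.mono (by
      intro n hn
      simp only [Function.mem_support] at hn ⊢
      intro h
      rw [h] at hn
      simp at hn) }


-- Step A lemma: every element of the iSup is a finite sum of homogeneous tensors
lemma stepA {H : Type} [CommRing H] [HopfAlgebra ℂ H]
    (𝒜 : ℕ → Submodule ℂ H) (n : ℕ) (y : H ⊗[ℂ] H)
    (hy : y ∈ ⨆ (p : ℕ) (_ : p ≤ n),
        LinearMap.range (TensorProduct.map (𝒜 p).subtype (𝒜 (n - p)).subtype)) :
    ∃ (M : ℕ) (a b : Fin M → H) (e : Fin M → ℕ),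
      (∀ i, e i ≤ n ∧ a i ∈ 𝒜 (e i) ∧ b i ∈ 𝒜 (n - e i)) ∧
      y = ∑ i, a i ⊗ₜ[ℂ] b i := by
  set Q : H ⊗[ℂ] H → Prop := fun y =>
    ∃ (M : ℕ) (a b : Fin M → H) (e : Fin M → ℕ),
      (∀ i, e i ≤ n ∧ a i ∈ 𝒜 (e i) ∧ b i ∈ 𝒜 (n - e i)) ∧
      y = ∑ i, a i ⊗ₜ[ℂ] b i with hQ
  have hzero : Q 0 := ⟨0, Fin.elim0, Fin.elim0, Fin.elim0, fun i => i.elim0, by simp⟩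
  have hadd : ∀ u v, Q u → Q v → Q (u + v) := by
    rintro u v ⟨M₁, a₁, b₁, e₁, h₁, rfl⟩ ⟨M₂, a₂, b₂, e₂, h₂, rfl⟩
    refine ⟨M₁ + M₂, Fin.append a₁ a₂, Fin.append b₁ b₂, Fin.append e₁ e₂, ?_, ?_⟩
    · intro i
      refine Fin.addCases (fun j => ?_) (fun j => ?_) i
      · simpa [Fin.append_left] using h₁ j
      · simpa [Fin.append_right] using h₂ j
    · rw [Fin.sum_univ_add]
      simp [Fin.append_left, Fin.append_right]
  -- main induction
  refine Submodule.iSup_induction (x := y)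
    (p := fun p => ⨆ (_ : p ≤ n),
      LinearMap.range (TensorProduct.map (𝒜 p).subtype (𝒜 (n - p)).subtype))
    (motive := Q) hy ?_ hzero hadd
  intro p z hz
  have hz' : z ∈ ⨆ (_ : p ≤ n),
      LinearMap.range (TensorProduct.map (𝒜 p).subtype (𝒜 (n - p)).subtype) := hz
  clear hz
  by_cases hp : p ≤ n
  · rw [iSup_pos hp] at hz' 
    obtain ⟨t, rfl⟩ := hz' 
    induction t with
    | zero => simpa using hzero
    | tmul u v =>
        exact ⟨1, fun _ => (u : H), fun _ => (v : H), fun _ => p,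
          fun _ => ⟨hp, u.2, v.2⟩, by simp⟩
    | add u v hu hv => rw [map_add]; exact hadd _ _ hu hv
  · rw [iSup_neg hp] at hz'
    simp only [Submodule.mem_bot] at hz'
    subst hz'; exact hzero

lemma decomp {H : Type} [CommRing H] [HopfAlgebra ℂ H]
    (𝒜 : ℕ → Submodule ℂ H)
    (hinternal : DirectSum.IsInternal 𝒜)
    (hcomul : ∀ (n : ℕ) (x : H), x ∈ 𝒜 n →
      Coalgebra.comul (R := ℂ) x ∈ ⨆ (p : ℕ) (_ : p ≤ n),
        LinearMap.range (TensorProduct.map (𝒜 p).subtype (𝒜 (n - p)).subtype))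
    (hconn : 𝒜 0 = Submodule.span ℂ {(1 : H)})
    (n : ℕ) (hn : 0 < n) (x : H) (hx : x ∈ 𝒜 n) :
    ∃ (N : ℕ) (x' x'' : Fin N → H) (d : Fin N → ℕ),
      (∀ i, 1 ≤ d i ∧ d i < n ∧ x' i ∈ 𝒜 (d i) ∧ x'' i ∈ 𝒜 (n - d i)) ∧
      Coalgebra.comul (R := ℂ) x
        = x ⊗ₜ[ℂ] 1 + 1 ⊗ₜ[ℂ] x + ∑ i, x' i ⊗ₜ[ℂ] x'' i := by
  obtain ⟨M, a, b, e, hM, hsum⟩ := stepA 𝒜 n _ (hcomul n x hx)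
  have hone : (1 : H) ∈ 𝒜 0 := by rw [hconn]; exact Submodule.mem_span_singleton_self 1
  -- choose scalars for degree-0 left factors and degree-0 right factors
  have hc0 : ∀ i : Fin M, ∃ c : ℂ, e i = 0 → a i = c • 1 := by
    intro i
    by_cases h : e i = 0
    · have := (hM i).2.1
      rw [h, hconn, Submodule.mem_span_singleton] at this
      obtain ⟨c, hc⟩ := this
      exact ⟨c, fun _ => hc.symm⟩
    · exact ⟨0, fun h' => absurd h' h⟩
  have hcn : ∀ i : Fin M, ∃ c : ℂ, e i = n → b i = c • 1 := by
    intro i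
    by_cases h : e i = n
    · have := (hM i).2.2
      rw [h, Nat.sub_self, hconn, Submodule.mem_span_singleton] at this
      obtain ⟨c, hc⟩ := this
      exact ⟨c, fun _ => hc.symm⟩
    · exact ⟨0, fun h' => absurd h' h⟩
  choose c0 hc0 using hc0
  choose cn hcn using hcn
  classical
  -- split the index set
  set s : Finset (Fin M) := Finset.univ.filter (fun i => 1 ≤ e i ∧ e i < n) with hs
  set s0 : Finset (Fin M) := Finset.univ.filter (fun i => e i = 0) with hs0
  set sn : Finset (Fin M) := Finset.univ.filter (fun i => e i = n) with hsn
  set y : H := ∑ i ∈ s0, c0 i • b i with hy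
  set z : H := ∑ i ∈ sn, cn i • a i with hz
  have hymem : y ∈ 𝒜 n := by
    refine Submodule.sum_mem _ fun i hi => Submodule.smul_mem _ _ ?_
    have hi0 : e i = 0 := by simpa [hs0] using hi
    have := (hM i).2.2
    rwa [hi0, Nat.sub_zero] at this
  have hzmem : z ∈ 𝒜 n := by
    refine Submodule.sum_mem _ fun i hi => Submodule.smul_mem _ _ ?_
    have hin : e i = n := by simpa [hsn] using hi
    have := (hM i).2.1
    rwa [hin] at this
  -- rewrite comul x
  have key : Coalgebra.comul (R := ℂ) x
      = z ⊗ₜ[ℂ] 1 + 1 ⊗ₜ[ℂ] y + ∑ i ∈ s, a i ⊗ₜ[ℂ] b i := by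
    have hsplit : (Finset.univ : Finset (Fin M)) = s0 ∪ sn ∪ s := by
      ext i
      simp only [Finset.mem_univ, Finset.mem_union, hs, hs0, hsn, Finset.mem_filter,
        true_and, true_iff]
      rcases Nat.eq_zero_or_pos (e i) with h | h
      · exact Or.inl (Or.inl h)
      · rcases lt_or_eq_of_le (hM i).1 with h' | h'
        · exact Or.inr ⟨h, h'⟩
        · exact Or.inl (Or.inr h')
    have hdisj1 : Disjoint s0 sn := by
      rw [Finset.disjoint_left]
      intro i hi hin
      simp only [hs0, hsn, Finset.mem_filter, true_and, Finset.mem_univ] at hi hin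
      omega
    have hdisj2 : Disjoint (s0 ∪ sn) s := by
      rw [Finset.disjoint_left]
      intro i hi hin
      simp only [hs0, hsn, hs, Finset.mem_filter, Finset.mem_union, true_and,
        Finset.mem_univ] at hi hin
      omega
    rw [hsum, ← Finset.sum_subset (Finset.subset_univ (s0 ∪ sn ∪ s))
      (fun i _ hi => absurd (hsplit ▸ Finset.mem_univ i) hi)]
    rw [Finset.sum_union hdisj2, Finset.sum_union hdisj1]
    have h0 : ∑ i ∈ s0, a i ⊗ₜ[ℂ] b i = 1 ⊗ₜ[ℂ] y := by
      rw [hy, TensorProduct.tmul_sum]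
      refine Finset.sum_congr rfl fun i hi => ?_
      have hi0 : e i = 0 := by simpa [hs0] using hi
      rw [hc0 i hi0, TensorProduct.smul_tmul, TensorProduct.tmul_smul]
    have hn' : ∑ i ∈ sn, a i ⊗ₜ[ℂ] b i = z ⊗ₜ[ℂ] 1 := by
      rw [hz, TensorProduct.sum_tmul]
      refine Finset.sum_congr rfl fun i hi => ?_
      have hin : e i = n := by simpa [hsn] using hi
      rw [hcn i hin]
      simp [TensorProduct.smul_tmul', TensorProduct.tmul_smul]
    rw [h0, hn']
    abel
  -- counit arguments: z = x and y = x
  have hindep := hinternal.submodule_iSupIndep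
  have hdis : Disjoint (𝒜 n) (⨆ (j) (_ : j ≠ n), 𝒜 j) := (iSupIndep_def.mp hindep) n
  have hmemsup : ∀ (m : ℕ), m ≠ n → ∀ w ∈ 𝒜 m, w ∈ ⨆ (j) (_ : j ≠ n), 𝒜 j := by
    intro m hm w hw
    exact Submodule.mem_iSup_of_mem m (Submodule.mem_iSup_of_mem hm hw)
  have hzx : z = x := by
    have h1 := Coalgebra.lTensor_counit_comul (R := ℂ) x
    rw [key] at h1
    have h2 := congrArg (TensorProduct.rid ℂ H) h1
    simp only [map_add, map_sum, LinearMap.lTensor_tmul, TensorProduct.rid_tmul] at h2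
    -- h2 : ε 1 • z + ε y • 1 + ∑ ε (b i) • a i = ε 1 • x
    rw [Bialgebra.counit_one] at h2
    simp only [one_smul] at h2
    have hd : x - z ∈ 𝒜 n := Submodule.sub_mem _ hx hzmem
    have hd' : x - z ∈ ⨆ (j) (_ : j ≠ n), 𝒜 j := by
      have h3 : x - z = Coalgebra.counit (R := ℂ) y • 1
          + ∑ i ∈ s, Coalgebra.counit (R := ℂ) (b i) • a i := by
        rw [← h2]; ring
      rw [h3]
      refine Submodule.add_mem _ (Submodule.smul_mem _ _ (hmemsup 0 hn.ne _ hone))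
        (Submodule.sum_mem _ fun i hi => Submodule.smul_mem _ _ ?_)
      have his : 1 ≤ e i ∧ e i < n := by simpa [hs] using hi
      exact hmemsup (e i) his.2.ne _ (hM i).2.1
    have := Submodule.disjoint_def.mp hdis _ hd hd'
    exact (sub_eq_zero.mp this).symm
  have hyx : y = x := by
    have h1 := Coalgebra.rTensor_counit_comul (R := ℂ) x
    rw [key] at h1
    have h2 := congrArg (TensorProduct.lid ℂ H) h1
    simp only [map_add, map_sum, LinearMap.rTensor_tmul, TensorProduct.lid_tmul] at h2
    rw [Bialgebra.counit_one] at h2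
    simp only [one_smul] at h2
    have hd : x - y ∈ 𝒜 n := Submodule.sub_mem _ hx hymem
    have hd' : x - y ∈ ⨆ (j) (_ : j ≠ n), 𝒜 j := by
      have h3 : x - y = Coalgebra.counit (R := ℂ) z • 1
          + ∑ i ∈ s, Coalgebra.counit (R := ℂ) (a i) • b i := by
        rw [← h2]; ring
      rw [h3]
      refine Submodule.add_mem _ (Submodule.smul_mem _ _ (hmemsup 0 hn.ne _ hone))
        (Submodule.sum_mem _ fun i hi => Submodule.smul_mem _ _ ?_)
      have his : 1 ≤ e i ∧ e i < n := by simpa [hs] using hi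
      have : n - e i ≠ n := by omega
      exact hmemsup (n - e i) this _ (hM i).2.2
    have := Submodule.disjoint_def.mp hdis _ hd hd'
    exact (sub_eq_zero.mp this).symm
  -- reindex the middle sum by Fin s.card
  refine ⟨s.card, fun j => a (s.equivFin.symm j), fun j => b (s.equivFin.symm j),
    fun j => e (s.equivFin.symm j), fun j => ?_, ?_⟩
  · set i := s.equivFin.symm j with hidef
    have hi : (i : Fin M) ∈ s := i.2
    have hi2 : (i : Fin M) ∈ Finset.univ.filter (fun k => 1 ≤ e k ∧ e k < n) := by
      rw [← hs]; exact hi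
    have his : 1 ≤ e (i : Fin M) ∧ e (i : Fin M) < n := (Finset.mem_filter.mp hi2).2
    exact ⟨his.1, his.2, (hM i).2.1, (hM i).2.2⟩
  · rw [key, hzx, hyx]
    congr 1
    rw [← Finset.sum_attach s (fun i => a i ⊗ₜ[ℂ] b i)]
    exact Fintype.sum_equiv s.equivFin.symm _ _ (fun j => rfl) |>.symm


lemma smul_bridge (c : ℂ) (f : LaurentSeries ℂ) :
    @HSMul.hSMul ℂ (LaurentSeries ℂ) (LaurentSeries ℂ)
        (@instHSMul ℂ (LaurentSeries ℂ) Algebra.toSMul) c f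
      = @HSMul.hSMul ℂ (LaurentSeries ℂ) (LaurentSeries ℂ)
        (@instHSMul ℂ (LaurentSeries ℂ) HahnSeries.instSMul) c f := by
  rw [Algebra.smul_def]
  ext n
  rw [HahnSeries.algebraMap_apply' (Γ := ℤ) (R := ℂ), ← PowerSeries.C_eq_algebraMap,
    HahnSeries.ofPowerSeries_C, HahnSeries.C_apply, HahnSeries.coeff_single_zero_mul]
  rfl

set_option maxHeartbeats 1000000
set_option synthInstance.maxHeartbeats 100000

/-- **The renormalized character.**  Let `H` be a commutative Hopf algebra over `ℂ`,
positively graded (internally, by `𝒜`) and connected, `φ : H → ℂ((z))` a character, and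
`φ₋` the algebra homomorphism given by the minimal-subtraction recursion
`φ₋(x) = −T(φ(x) + Σ φ₋(x′) φ(x″))` over decompositions
`Δ x = x ⊗ 1 + 1 ⊗ x + Σ x′ ⊗ x″` into homogeneous terms of strictly lower positive
degree.  If `φ₊` is the linear map with `φ₊ 1 = 1` and
`φ₊(x) = φ(x) + φ₋(x) + Σ φ₋(x′) φ(x″)` on homogeneous elements of positive degree,
then `φ₊ = φ₋ ⋆ φ`, `φ₊` is multiplicative (hence a `ℂ`-algebra homomorphism), and
`φ₊` takes values in `ℂ[[z]]` (no poles at `z = 0`). -/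
theorem renormalized_character
    {H : Type} [CommRing H] [HopfAlgebra ℂ H]
    (𝒜 : ℕ → Submodule ℂ H)
    (hinternal : DirectSum.IsInternal 𝒜)
    (hmul : ∀ (p q : ℕ) (x y : H), x ∈ 𝒜 p → y ∈ 𝒜 q → x * y ∈ 𝒜 (p + q))
    (hcomul : ∀ (n : ℕ) (x : H), x ∈ 𝒜 n →
      Coalgebra.comul (R := ℂ) x ∈ ⨆ (p : ℕ) (_ : p ≤ n),
        LinearMap.range (TensorProduct.map (𝒜 p).subtype (𝒜 (n - p)).subtype))
    (hanti : ∀ (n : ℕ) (x : H), x ∈ 𝒜 n → HopfAlgebra.antipode (R := ℂ) x ∈ 𝒜 n)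
    (hconn : 𝒜 0 = Submodule.span ℂ {(1 : H)})
    (φ : H →ₐ[ℂ] LaurentSeries ℂ)
    (φm : H →ₐ[ℂ] LaurentSeries ℂ)
    (hrec : ∀ (n : ℕ), 0 < n → ∀ x ∈ 𝒜 n,
      ∀ (N : ℕ) (x' x'' : Fin N → H) (d : Fin N → ℕ),
        (∀ i, 1 ≤ d i ∧ d i < n ∧ x' i ∈ 𝒜 (d i) ∧ x'' i ∈ 𝒜 (n - d i)) →
        Coalgebra.comul (R := ℂ) x
          = x ⊗ₜ[ℂ] 1 + 1 ⊗ₜ[ℂ] x + ∑ i, x' i ⊗ₜ[ℂ] x'' i →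
        φm x = - polePart (φ x + ∑ i, φm (x' i) * φ (x'' i)))
    (φp : H →ₗ[ℂ] LaurentSeries ℂ)
    (hpone : φp 1 = 1)
    (hprec : ∀ (n : ℕ), 0 < n → ∀ x ∈ 𝒜 n,
      ∀ (N : ℕ) (x' x'' : Fin N → H) (d : Fin N → ℕ),
        (∀ i, 1 ≤ d i ∧ d i < n ∧ x' i ∈ 𝒜 (d i) ∧ x'' i ∈ 𝒜 (n - d i)) →
        Coalgebra.comul (R := ℂ) x
          = x ⊗ₜ[ℂ] 1 + 1 ⊗ₜ[ℂ] x + ∑ i, x' i ⊗ₜ[ℂ] x'' i →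
        φp x = φ x + φm x + ∑ i, φm (x' i) * φ (x'' i)) :
    (∀ x : H, φp x = conv φm.toLinearMap φ.toLinearMap x) ∧
    (∀ x y : H, φp (x * y) = φp x * φp y) ∧
    (∀ (x : H) (n : ℤ), n < 0 → (φp x).coeff n = 0) := by
  classical
  have hdec := decomp 𝒜 hinternal hcomul hconn
  -- Part 1 on homogeneous elements
  have hconv1 : conv φm.toLinearMap φ.toLinearMap (1 : H) = 1 := by
    simp [conv, Bialgebra.comul_one, Algebra.TensorProduct.one_def]
  have hconvsmul : ∀ (c : ℂ) (w : H), conv φm.toLinearMap φ.toLinearMap (c • w)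
      = @HSMul.hSMul ℂ (LaurentSeries ℂ) (LaurentSeries ℂ)
          (@instHSMul ℂ (LaurentSeries ℂ) HahnSeries.instSMul) c
          (conv φm.toLinearMap φ.toLinearMap w) := by
    intro c w
    have h1 : conv φm.toLinearMap φ.toLinearMap (c • w)
        = @HSMul.hSMul ℂ (LaurentSeries ℂ) (LaurentSeries ℂ)
            (@instHSMul ℂ (LaurentSeries ℂ) Algebra.toSMul) c
            (conv φm.toLinearMap φ.toLinearMap w) := by
      letI : Module ℂ (LaurentSeries ℂ) := Algebra.toModule
      exact (conv φm.toLinearMap φ.toLinearMap).map_smul c w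
    rw [h1, smul_bridge]
  have hconvadd : ∀ a b : H, conv φm.toLinearMap φ.toLinearMap (a + b)
      = conv φm.toLinearMap φ.toLinearMap a + conv φm.toLinearMap φ.toLinearMap b := by
    intro a b
    letI : Module ℂ (LaurentSeries ℂ) := Algebra.toModule
    exact (conv φm.toLinearMap φ.toLinearMap).map_add a b
  have hconvzero : conv φm.toLinearMap φ.toLinearMap (0 : H) = 0 := by
    letI : Module ℂ (LaurentSeries ℂ) := Algebra.toModule
    exact (conv φm.toLinearMap φ.toLinearMap).map_zero
  have key1 : ∀ (n : ℕ) (x : H), x ∈ 𝒜 n →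
      φp x = conv φm.toLinearMap φ.toLinearMap x := by
    intro n x hx
    rcases Nat.eq_zero_or_pos n with h0 | hpos
    · subst h0
      rw [hconn, Submodule.mem_span_singleton] at hx
      obtain ⟨c, rfl⟩ := hx
      rw [φp.map_smul, hpone, hconvsmul, hconv1]
    · obtain ⟨N, x', x'', d, hprop, hd⟩ := hdec n hpos x hx
      have hc : conv φm.toLinearMap φ.toLinearMap x
          = φm x * φ 1 + φm 1 * φ x + ∑ i, φm (x' i) * φ (x'' i) := by
        simp only [conv, LinearMap.coe_comp, Function.comp_apply, hd, map_add, map_sum,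
          TensorProduct.map_tmul, LinearMap.mul'_apply, AlgHom.toLinearMap_apply]
      rw [hc, map_one, map_one, mul_one, one_mul,
        hprec n hpos x hx N x' x'' d hprop hd]
      ring
  have key1' : ∀ x : H, φp x = conv φm.toLinearMap φ.toLinearMap x := by
    intro x
    set p : Submodule ℂ H :=
      { carrier := {x : H | φp x = conv φm.toLinearMap φ.toLinearMap x}
        add_mem' := fun {a b} ha hb => by
          have ha' : φp a = conv φm.toLinearMap φ.toLinearMap a := ha
          have hb' : φp b = conv φm.toLinearMap φ.toLinearMap b := hb
          show φp (a + b) = conv φm.toLinearMap φ.toLinearMap (a + b)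
          rw [φp.map_add, hconvadd, ha', hb']
        zero_mem' := by
          show φp 0 = conv φm.toLinearMap φ.toLinearMap 0
          rw [φp.map_zero, hconvzero]
        smul_mem' := fun c a ha => by
          have ha' : φp a = conv φm.toLinearMap φ.toLinearMap a := ha
          show φp (c • a) = conv φm.toLinearMap φ.toLinearMap (c • a)
          rw [φp.map_smul, ha', hconvsmul] } with hpdef
    have htop : (⊤ : Submodule ℂ H) ≤ p := by
      rw [← hinternal.submodule_iSup_eq_top]
      exact iSup_le fun n w hw => key1 n w hw
    exact htop (Submodule.mem_top (x := x))
  refine ⟨key1', ?_, ?_⟩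
  · -- multiplicativity
    letI : Module ℂ (LaurentSeries ℂ) := Algebra.toModule
    intro x y
    rw [key1' (x * y), key1' x, key1' y]
    have hF : ∀ u v : H ⊗[ℂ] H,
        LinearMap.mul' ℂ (LaurentSeries ℂ)
          (TensorProduct.map φm.toLinearMap φ.toLinearMap (u * v))
        = LinearMap.mul' ℂ (LaurentSeries ℂ)
            (TensorProduct.map φm.toLinearMap φ.toLinearMap u)
          * LinearMap.mul' ℂ (LaurentSeries ℂ)
            (TensorProduct.map φm.toLinearMap φ.toLinearMap v) := by
      intro u v
      induction u with
      | zero => rw [zero_mul, map_zero, map_zero, zero_mul]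
      | add u₁ u₂ h1 h2 =>
          rw [add_mul, map_add, map_add, map_add, map_add, h1, h2, add_mul]
      | tmul a b =>
          induction v with
          | zero => rw [mul_zero, map_zero, map_zero, mul_zero]
          | add v₁ v₂ h1 h2 =>
              rw [mul_add, map_add, map_add, map_add, map_add, h1, h2, mul_add]
          | tmul c d =>
              rw [Algebra.TensorProduct.tmul_mul_tmul]
              simp only [TensorProduct.map_tmul, LinearMap.mul'_apply,
                AlgHom.toLinearMap_apply, map_mul]
              ring
    simp only [conv, LinearMap.coe_comp, Function.comp_apply, Bialgebra.comul_mul]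
    exact hF _ _
  · -- no poles
    have key3 : ∀ (n : ℕ) (x : H), x ∈ 𝒜 n → ∀ m : ℤ, m < 0 → (φp x).coeff m = 0 := by
      intro n x hx m hm
      rcases Nat.eq_zero_or_pos n with h0 | hpos
      · subst h0
        rw [hconn, Submodule.mem_span_singleton] at hx
        obtain ⟨c, rfl⟩ := hx
        rw [LinearMap.map_smul, hpone, HahnSeries.coeff_smul, HahnSeries.coeff_one,
          if_neg hm.ne, smul_zero]
      · obtain ⟨N, x', x'', d, hprop, hd⟩ := hdec n hpos x hx
        have h1 := hrec n hpos x hx N x' x'' d hprop hd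
        have h2 := hprec n hpos x hx N x' x'' d hprop hd
        set w : LaurentSeries ℂ := φ x + ∑ i, φm (x' i) * φ (x'' i) with hw
        have h3 : φp x = w - polePart w := by
          rw [h2, h1]; rw [hw]; ring
        rw [h3, HahnSeries.coeff_sub]
        have : (polePart w).coeff m = w.coeff m := if_pos hm
        rw [this, sub_self]
    intro x m hm
    set p : Submodule ℂ H :=
      { carrier := {x : H | ∀ m : ℤ, m < 0 → (φp x).coeff m = 0}
        add_mem' := fun {a b} ha hb m hm => by
          rw [LinearMap.map_add, HahnSeries.coeff_add, ha m hm, hb m hm, add_zero]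
        zero_mem' := fun m hm => by simp
        smul_mem' := fun c a ha m hm => by
          rw [LinearMap.map_smul, HahnSeries.coeff_smul, ha m hm, smul_zero] } with hp
    have htop : (⊤ : Submodule ℂ H) ≤ p := by
      rw [← hinternal.submodule_iSup_eq_top]
      exact iSup_le fun n w hw => key3 n w hw
    exact htop (Submodule.mem_top (x := x)) m hm

end
end

section
/- Let n ≥ 1, let k₁, …, kₙ be positive real numbers, and let v ≥ 0. Then the iterated integral of the monomial over the ordered simplex satisfies ∫_{0 ≤ s₁ ≤ s₂ ≤ ⋯ ≤ sₙ ≤ v} s₁^{k₁−1} s₂^{k₂−1} ⋯ sₙ^{kₙ−1} ds₁ ⋯ dsₙ = v^{k₁+⋯+kₙ} / ( k₁ (k₁+k₂) ⋯ (k₁+k₂+⋯+kₙ) ). -/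
/-!
Statement 9: the iterated integral of the monomial `s₁^{k₁−1} ⋯ sₙ^{kₙ−1}` over the
ordered simplex `0 ≤ s₁ ≤ ⋯ ≤ sₙ ≤ v` equals
`v^{k₁+⋯+kₙ} / (k₁ (k₁+k₂) ⋯ (k₁+⋯+kₙ))` — the rational coefficients of the universal
singular frame of perturbative renormalization.
-/

open MeasureTheory

noncomputable section

/-- The ordered simplex `{0 ≤ s₁ ≤ s₂ ≤ ⋯ ≤ sₙ ≤ v}`. -/
def orderedSimplex (n : ℕ) (a b : ℝ) : Set (Fin n → ℝ) :=
  {s | (∀ i j : Fin n, i ≤ j → s i ≤ s j) ∧ ∀ i, s i ∈ Set.Icc a b}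

lemma measurableSet_orderedSimplex (n : ℕ) (a b : ℝ) :
    MeasurableSet (orderedSimplex n a b) := by
  have h1 : MeasurableSet {s : Fin n → ℝ | ∀ i j : Fin n, i ≤ j → s i ≤ s j} := by
    have : {s : Fin n → ℝ | ∀ i j : Fin n, i ≤ j → s i ≤ s j} =
        ⋂ (i : Fin n), ⋂ (j : Fin n), ⋂ (_ : i ≤ j), {s : Fin n → ℝ | s i ≤ s j} := by
      ext s; simp [Set.mem_iInter]
    rw [this]
    exact MeasurableSet.iInter fun i => .iInter fun j => .iInter fun _ =>
      measurableSet_le (measurable_pi_apply i) (measurable_pi_apply j)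
  have h2 : MeasurableSet {s : Fin n → ℝ | ∀ i, s i ∈ Set.Icc a b} := by
    have : {s : Fin n → ℝ | ∀ i, s i ∈ Set.Icc a b} =
        ⋂ (i : Fin n), (fun s : Fin n → ℝ => s i) ⁻¹' Set.Icc a b := by
      ext s; simp [Set.mem_iInter]
    rw [this]
    exact MeasurableSet.iInter fun i => (measurable_pi_apply i) measurableSet_Icc
  exact h1.inter h2

lemma measurable_monomial {n : ℕ} (k : Fin n → ℝ) :
    Measurable fun s : Fin n → ℝ => ∏ i, s i ^ (k i - 1) := by fun_prop

lemma snoc_mem_orderedSimplex_iff {n : ℕ} {v t : ℝ} {s : Fin n → ℝ} :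
    (Fin.snoc s t : Fin (n + 1) → ℝ) ∈ orderedSimplex (n + 1) 0 v ↔
      t ∈ Set.Icc (0 : ℝ) v ∧ s ∈ orderedSimplex n 0 t := by
  constructor
  · rintro ⟨h1, h2⟩
    have ht : t ∈ Set.Icc (0 : ℝ) v := by simpa using h2 (Fin.last n)
    refine ⟨ht, fun i j hij => ?_, fun i => ?_⟩
    · have := h1 i.castSucc j.castSucc (by simpa using hij)
      simpa using this
    · have h0 : (0 : ℝ) ≤ s i := by simpa using (h2 i.castSucc).1
      have hle : s i ≤ t := by
        have := h1 i.castSucc (Fin.last n) (Fin.le_last _)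
        simpa using this
      exact ⟨h0, hle⟩
  · rintro ⟨⟨ht0, htv⟩, hmono, hIcc⟩
    constructor
    · intro i j hij
      rcases Fin.eq_castSucc_or_eq_last j with ⟨j', rfl⟩ | rfl
      · rcases Fin.eq_castSucc_or_eq_last i with ⟨i', rfl⟩ | rfl
        · simpa using hmono i' j' (by simpa using hij)
        · exact absurd (lt_of_le_of_lt hij (Fin.castSucc_lt_last j')) (lt_irrefl _)
      · rcases Fin.eq_castSucc_or_eq_last i with ⟨i', rfl⟩ | rfl
        · simpa using (hIcc i').2
        · simp
    · intro i
      rcases Fin.eq_castSucc_or_eq_last i with ⟨i', rfl⟩ | rfl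
      · simpa using ⟨(hIcc i').1, le_trans (hIcc i').2 htv⟩
      · simpa using ⟨ht0, htv⟩

lemma prod_snoc_rpow {n : ℕ} (k : Fin (n + 1) → ℝ) (s : Fin n → ℝ) (t : ℝ) :
    ∏ i, (Fin.snoc s t : Fin (n + 1) → ℝ) i ^ (k i - 1) =
      (∏ i : Fin n, s i ^ (k i.castSucc - 1)) * t ^ (k (Fin.last n) - 1) := by
  rw [Fin.prod_univ_castSucc]
  simp

lemma Iic_castSucc_eq {n : ℕ} (j : Fin n) :
    Finset.Iic (Fin.castSucc j) = (Finset.Iic j).map Fin.castSuccEmb := by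
  ext i
  simp only [Finset.mem_Iic, Finset.mem_map, Fin.castSuccEmb, Function.Embedding.coeFn_mk]
  constructor
  · intro hi
    have hlt : i < Fin.last n := lt_of_le_of_lt hi (Fin.castSucc_lt_last j)
    refine ⟨i.castPred hlt.ne, ?_, ?_⟩
    · rw [← Fin.castSucc_le_castSucc_iff]
      simpa [Fin.castSucc_castPred] using hi
    · exact Fin.castSucc_castPred i hlt.ne
  · rintro ⟨a, ha, rfl⟩
    exact Fin.castSucc_le_castSucc_iff.mpr ha

lemma sum_Iic_castSucc {n : ℕ} (k : Fin (n + 1) → ℝ) (j : Fin n) :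
    ∑ i ∈ Finset.Iic (Fin.castSucc j), k i = ∑ i ∈ Finset.Iic j, k (Fin.castSucc i) := by
  rw [Iic_castSucc_eq, Finset.sum_map]
  simp [Fin.castSuccEmb]
  exact Finset.sum_congr rfl fun i _ => rfl

lemma Iic_last_eq_univ {n : ℕ} : Finset.Iic (Fin.last n) = (Finset.univ : Finset (Fin (n+1))) := by
  ext i; simp [Fin.le_last]

lemma lint_one_dim {b v : ℝ} (hb : 0 < b) (hv : 0 ≤ v) :
    ∫⁻ t in Set.Ioc (0 : ℝ) v, ENNReal.ofReal (t ^ (b - 1)) = ENNReal.ofReal (v ^ b / b) := by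
  rw [← ofReal_integral_eq_lintegral_ofReal]
  · congr 1
    rw [← intervalIntegral.integral_of_le hv,
      integral_rpow (Or.inl (by linarith)), sub_add_cancel,
      Real.zero_rpow hb.ne', sub_zero]
  · exact (intervalIntegral.intervalIntegrable_rpow' (by linarith)).1
  · filter_upwards [ae_restrict_mem measurableSet_Ioc] with t ht
    exact Real.rpow_nonneg ht.1.le _

lemma key_lintegral : ∀ (n : ℕ) (k : Fin n → ℝ), (∀ i, 0 < k i) → ∀ v : ℝ, 0 ≤ v →
    ∫⁻ s in orderedSimplex n 0 v, ENNReal.ofReal (∏ i, s i ^ (k i - 1)) =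
      ENNReal.ofReal (v ^ (∑ i, k i) / ∏ j : Fin n, ∑ i ∈ Finset.Iic j, k i) := by
  intro n
  induction n with
  | zero =>
    intro k hk v hv
    have hset : orderedSimplex 0 0 v = Set.univ := by
      ext s
      simp [orderedSimplex, Fin.forall_fin_zero_pi]
    rw [hset, Measure.restrict_univ]
    simp only [Finset.univ_eq_empty, Finset.prod_empty, Finset.sum_empty, Real.rpow_zero,
      ENNReal.ofReal_one, div_one]
    rw [lintegral_const, one_mul]
    rw [volume_pi, Measure.pi_univ]
    simp
  | succ n IH =>
    intro k hk v hv
    set a := k (Fin.last n) with ha_def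
    set k' : Fin n → ℝ := fun i => k i.castSucc with hk'_def
    have hk' : ∀ i, 0 < k' i := fun i => hk _
    have ha : 0 < a := hk _
    set K := ∑ i, k' i with hK_def
    set D := ∏ j : Fin n, ∑ i ∈ Finset.Iic j, k' i with hD_def
    have hK : 0 ≤ K := Finset.sum_nonneg fun i _ => (hk' i).le
    have hD : 0 < D := Finset.prod_pos fun j _ =>
      Finset.sum_pos (fun i _ => hk' i) ⟨j, Finset.mem_Iic.mpr le_rfl⟩
    set S := K + a with hS_def
    have hS : 0 < S := by positivity
    set e := MeasurableEquiv.piFinSuccAbove (fun _ : Fin (n + 1) => ℝ) (Fin.last n) with he_def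
    set F : (Fin (n + 1) → ℝ) → ENNReal :=
      (orderedSimplex (n + 1) 0 v).indicator
        (fun s => ENNReal.ofReal (∏ i, s i ^ (k i - 1))) with hF_def
    have hFmeas : Measurable F :=
      ((measurable_monomial k).ennreal_ofReal).indicator (measurableSet_orderedSimplex _ _ _)
    have hesymm : ∀ z : ℝ × (Fin n → ℝ), e.symm z = Fin.snoc z.2 z.1 := by
      intro z
      show (Fin.insertNthEquiv (fun _ => ℝ) (Fin.last n)) z = _
      rw [Fin.insertNthEquiv_last]
      rfl
    have hmp := volume_preserving_piFinSuccAbove (fun _ : Fin (n + 1) => ℝ) (Fin.last n)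
    calc
      ∫⁻ s in orderedSimplex (n + 1) 0 v, ENNReal.ofReal (∏ i, s i ^ (k i - 1))
          = ∫⁻ s, F s := (lintegral_indicator (measurableSet_orderedSimplex _ _ _) _).symm
      _ = ∫⁻ z : ℝ × (Fin n → ℝ), F (e.symm z) := by
          rw [← hmp.lintegral_comp_emb e.measurableEmbedding (fun z => F (e.symm z))]
          simp only [he_def, MeasurableEquiv.symm_apply_apply]
      _ = ∫⁻ t : ℝ, ∫⁻ s : Fin n → ℝ, F (e.symm (t, s)) := by
          rw [Measure.volume_eq_prod]
          exact lintegral_prod _ ((hFmeas.comp e.symm.measurable).aemeasurable)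
      _ = ∫⁻ t in Set.Icc (0:ℝ) v,
            ENNReal.ofReal (t ^ (a - 1)) *
              ∫⁻ s in orderedSimplex n 0 t, ENNReal.ofReal (∏ i, s i ^ (k' i - 1)) := by
          rw [← lintegral_indicator measurableSet_Icc]
          congr 1
          ext t
          by_cases ht : t ∈ Set.Icc (0:ℝ) v
          · rw [Set.indicator_of_mem ht]
            have : ∀ s : Fin n → ℝ, F (e.symm (t, s)) =
                (orderedSimplex n 0 t).indicator
                  (fun s => ENNReal.ofReal (t ^ (a - 1)) *
                    ENNReal.ofReal (∏ i, s i ^ (k' i - 1))) s := by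
              intro s
              rw [hesymm]
              simp only [hF_def, Set.indicator]
              by_cases hs : s ∈ orderedSimplex n 0 t
              · rw [if_pos (snoc_mem_orderedSimplex_iff.mpr ⟨ht, hs⟩), if_pos hs,
                  prod_snoc_rpow]
                rw [← ENNReal.ofReal_mul (Real.rpow_nonneg ht.1 _)]
                congr 1
                ring
              · rw [if_neg (fun h => hs (snoc_mem_orderedSimplex_iff.mp h).2), if_neg hs]
            simp only [this]
            rw [lintegral_indicator (measurableSet_orderedSimplex _ _ _)]
            rw [lintegral_const_mul' _ _ ENNReal.ofReal_ne_top]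
          · rw [Set.indicator_of_notMem ht]
            have : ∀ s : Fin n → ℝ, F (e.symm (t, s)) = 0 := by
              intro s
              rw [hesymm]
              exact Set.indicator_of_notMem
                (fun h => ht (snoc_mem_orderedSimplex_iff.mp h).1) _
            simp [this]
      _ = ∫⁻ t in Set.Icc (0:ℝ) v,
            ENNReal.ofReal (t ^ (a - 1)) * ENNReal.ofReal (t ^ K / D) := by
          apply setLIntegral_congr_fun measurableSet_Icc
          intro t ht; beta_reduce
          rw [IH k' hk' t ht.1]
      _ = ∫⁻ t in Set.Ioc (0:ℝ) v,
            ENNReal.ofReal (t ^ (a - 1)) * ENNReal.ofReal (t ^ K / D) := by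
          rw [← Measure.restrict_congr_set Ioc_ae_eq_Icc]
      _ = ∫⁻ t in Set.Ioc (0:ℝ) v,
            ENNReal.ofReal (t ^ (S - 1)) * ENNReal.ofReal (1 / D) := by
          apply setLIntegral_congr_fun measurableSet_Ioc
          intro t ht; beta_reduce
          rw [← ENNReal.ofReal_mul (Real.rpow_nonneg ht.1.le _),
            ← ENNReal.ofReal_mul (Real.rpow_nonneg ht.1.le _)]
          congr 1
          rw [div_eq_mul_one_div, ← mul_assoc, ← Real.rpow_add ht.1]
          have hexp : a - 1 + K = S - 1 := by rw [hS_def]; ring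
          rw [hexp]
      _ = ENNReal.ofReal (v ^ S / S) * ENNReal.ofReal (1 / D) := by
          rw [lintegral_mul_const' _ _ ENNReal.ofReal_ne_top, lint_one_dim hS hv]
      _ = ENNReal.ofReal (v ^ (∑ i, k i) / ∏ j : Fin (n+1), ∑ i ∈ Finset.Iic j, k i) := by
          rw [← ENNReal.ofReal_mul (by positivity)]
          congr 1
          have hsum : ∑ i, k i = S := by
            rw [hS_def, hK_def, Fin.sum_univ_castSucc]
          have hprod : ∏ j : Fin (n+1), ∑ i ∈ Finset.Iic j, k i = D * S := by
            rw [Fin.prod_univ_castSucc]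
            congr 1
            · exact Finset.prod_congr rfl fun j _ => sum_Iic_castSucc k j
            · rw [Iic_last_eq_univ, hsum]
          rw [hsum, hprod]
          rw [div_mul_div_comm, mul_one, mul_comm S D]

/-- **Universal singular frame coefficients.**  For `n ≥ 1`, positive reals
`k₁, …, kₙ` and `v ≥ 0`,
`∫_{0 ≤ s₁ ≤ ⋯ ≤ sₙ ≤ v} s₁^{k₁−1} ⋯ sₙ^{kₙ−1} ds₁⋯dsₙ
  = v^{k₁+⋯+kₙ} / (k₁ (k₁+k₂) ⋯ (k₁+⋯+kₙ))`. -/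
theorem iterated_simplex_integral
    (n : ℕ) (hn : 1 ≤ n) (k : Fin n → ℝ) (hk : ∀ i, 0 < k i) (v : ℝ) (hv : 0 ≤ v) :
    ∫ s in orderedSimplex n 0 v, ∏ i, s i ^ (k i - 1) =
      v ^ (∑ i, k i) / ∏ j : Fin n, ∑ i ∈ Finset.Iic j, k i := by
  have hD : 0 < ∏ j : Fin n, ∑ i ∈ Finset.Iic j, k i :=
    Finset.prod_pos fun j _ =>
      Finset.sum_pos (fun i _ => hk i) ⟨j, Finset.mem_Iic.mpr le_rfl⟩
  rw [integral_eq_lintegral_of_nonneg_ae]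
  · rw [key_lintegral n k hk v hv,
      ENNReal.toReal_ofReal (div_nonneg (Real.rpow_nonneg hv _) hD.le)]
  · filter_upwards [ae_restrict_mem (measurableSet_orderedSimplex n 0 v)] with s hs
    exact Finset.prod_nonneg fun i _ => Real.rpow_nonneg (hs.2 i).1 _
  · exact ((measurable_monomial k).aestronglyMeasurable).restrict


end
end

section
/- Let n ≥ 1 and let k₁, …, kₙ be positive real numbers. Then the function (s₁, …, sₙ) ↦ e^{−k₁ s₁} e^{−k₂ s₂} ⋯ e^{−kₙ sₙ} is integrable on the unbounded ordered region { s ∈ ℝⁿ : s₁ ≥ s₂ ≥ ⋯ ≥ sₙ ≥ 0 }, and its integral equals 1 / ( k₁ (k₁+k₂) ⋯ (k₁+k₂+⋯+kₙ) ). -/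
/-!
Statement 10: the iterated integral of `e^{−k₁s₁} ⋯ e^{−kₙsₙ}` over the unbounded
ordered region `s₁ ≥ s₂ ≥ ⋯ ≥ sₙ ≥ 0` converges and equals
`1 / (k₁ (k₁+k₂) ⋯ (k₁+⋯+kₙ))` — the iterated integrals of the 't Hooft relations
expressing the counterterms in terms of the beta function.
-/

open MeasureTheory

noncomputable section

/-- The unbounded ordered cone `{s₁ ≥ s₂ ≥ ⋯ ≥ sₙ ≥ 0}`. -/
def orderedCone (n : ℕ) : Set (Fin n → ℝ) :=
  {s | (∀ i j : Fin n, i ≤ j → s j ≤ s i) ∧ ∀ i, 0 ≤ s i}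

lemma orderedCone_measurableSet (n : ℕ) : MeasurableSet (orderedCone n) := by
  have : orderedCone n =
      (⋂ (i : Fin n) (j : Fin n) (_ : i ≤ j), {s : Fin n → ℝ | s j ≤ s i}) ∩
        ⋂ (i : Fin n), {s : Fin n → ℝ | 0 ≤ s i} := by
    ext s
    simp only [orderedCone, Set.mem_setOf_eq, Set.mem_inter_iff, Set.mem_iInter]
  rw [this]
  refine MeasurableSet.inter ?_ ?_
  · exact MeasurableSet.iInter fun i => MeasurableSet.iInter fun j =>
      MeasurableSet.iInter fun _ =>
        measurableSet_le (measurable_pi_apply j) (measurable_pi_apply i)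
  · exact MeasurableSet.iInter fun i =>
      measurableSet_le measurable_const (measurable_pi_apply i)

lemma integral_exp_neg_mul_Ioi_zero {b : ℝ} (hb : 0 < b) :
    ∫ x in Set.Ioi (0 : ℝ), Real.exp (-(b * x)) = b⁻¹ := by
  have := integral_comp_mul_left_Ioi (fun x => Real.exp (-x)) 0 hb
  simp only [mul_zero, integral_exp_neg_Ioi, neg_zero, Real.exp_zero, smul_eq_mul,
    mul_one] at this
  simpa using this

/-- **'t Hooft-relation integrals.**  For `n ≥ 1` and positive reals `k₁, …, kₙ`, the
function `s ↦ e^{−k₁s₁} ⋯ e^{−kₙsₙ}` is Lebesgue integrable on the region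
`{s₁ ≥ s₂ ≥ ⋯ ≥ sₙ ≥ 0}` and
`∫_{s₁ ≥ ⋯ ≥ sₙ ≥ 0} e^{−k₁s₁} ⋯ e^{−kₙsₙ} ds₁⋯dsₙ
  = 1 / (k₁ (k₁+k₂) ⋯ (k₁+⋯+kₙ))`. -/
theorem iterated_exponential_integral
    (n : ℕ) (hn : 1 ≤ n) (k : Fin n → ℝ) (hk : ∀ i, 0 < k i) :
    IntegrableOn (fun s : Fin n → ℝ => ∏ i, Real.exp (-(k i) * s i))
      (orderedCone n) volume ∧
    ∫ s in orderedCone n, ∏ i, Real.exp (-(k i) * s i) =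
      1 / ∏ j : Fin n, ∑ i ∈ Finset.Iic j, k i := by
  classical
  set f : (Fin n → ℝ) → ℝ := fun s => ∏ i, Real.exp (-(k i) * s i) with hf
  set K : Fin n → ℝ := fun j => ∑ i ∈ Finset.Iic j, k i with hKdef
  have hKpos : ∀ j, 0 < K j := fun j =>
    Finset.sum_pos (fun i _ => hk i) ⟨j, Finset.mem_Iic.2 le_rfl⟩
  -- the linear change of variables
  set M : Matrix (Fin n) (Fin n) ℝ :=
    Matrix.of (fun i j => if i ≤ j then (1 : ℝ) else 0) with hMdef
  have hMtri : M.BlockTriangular id := by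
    intro i j hij
    simp only [hMdef, Matrix.of_apply, id] at *
    rw [if_neg (not_le.2 hij)]
  have hMdet : M.det = 1 := by
    rw [Matrix.det_of_upperTriangular hMtri]
    simp [hMdef]
  set L : (Fin n → ℝ) →ₗ[ℝ] (Fin n → ℝ) := Matrix.toLin' M with hLdef
  have hLapp : ∀ (t : Fin n → ℝ) (i : Fin n), L t i = ∑ j ∈ Finset.Ici i, t j := by
    intro t i
    have : L t i = ∑ j, (if i ≤ j then (1 : ℝ) else 0) * t j := by
      simp [hLdef, Matrix.toLin'_apply, Matrix.mulVec, dotProduct, hMdef]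
    rw [this]
    rw [show (Finset.Ici i) = Finset.univ.filter (fun j => i ≤ j) by ext j; simp]
    rw [Finset.sum_filter]
    congr 1; ext j
    by_cases h : i ≤ j <;> simp [h]
  have hLdet : LinearMap.det L = 1 := by
    rw [hLdef, LinearMap.det_toLin', hMdet]
  -- measure preserving
  have hLcont : Continuous L := L.continuous_of_finiteDimensional
  have hmp : MeasurePreserving (⇑L) (volume : Measure (Fin n → ℝ)) volume := by
    refine ⟨hLcont.measurable, ?_⟩
    rw [Real.map_linearMap_volume_pi_eq_smul_volume_pi (by rw [hLdet]; norm_num)]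
    rw [hLdet]
    norm_num
  -- measurable embedding
  haveI : Invertible M := M.invertibleOfIsUnitDet (by rw [hMdet]; exact isUnit_one)
  have hemb : MeasurableEmbedding (⇑L) := by
    have h := ((M.toLinearEquiv' ‹Invertible M›).toContinuousLinearEquiv).toHomeomorph.measurableEmbedding
    convert h using 1
    funext x
    rfl
  -- preimage of the cone
  have hpre : ∀ t : Fin n → ℝ, L t ∈ orderedCone n ↔ ∀ j, 0 ≤ t j := by
    intro t
    constructor
    · rintro ⟨hmono, hnn⟩ i
      by_cases hi : (i : ℕ) + 1 < n
      · set i' : Fin n := ⟨(i : ℕ) + 1, hi⟩ with hi'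
        have hIoi : Finset.Ioi i = Finset.Ici i' := by
          ext j
          simp only [Finset.mem_Ioi, Finset.mem_Ici, Fin.lt_def, Fin.le_def, hi']
          omega
        have hsplit : L t i = t i + L t i' := by
          rw [hLapp, hLapp, ← hIoi]
          rw [show Finset.Ici i = insert i (Finset.Ioi i) by
            ext j
            simp only [Finset.mem_Ici, Finset.mem_insert, Finset.mem_Ioi,
              Fin.le_def, Fin.lt_def, Fin.ext_iff]
            omega]
          rw [Finset.sum_insert (by simp)]
        have hle : L t i' ≤ L t i := hmono i i' (by simp [hi', Fin.le_def])
        linarith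
      · have hIci : Finset.Ici i = {i} := by
          ext j
          have := j.isLt
          simp only [Finset.mem_Ici, Finset.mem_singleton, Fin.le_def, Fin.ext_iff]
          omega
        have := hnn i
        rw [hLapp, hIci, Finset.sum_singleton] at this
        exact this
    · intro ht
      constructor
      · intro i j hij
        rw [hLapp, hLapp]
        exact Finset.sum_le_sum_of_subset_of_nonneg (Finset.Ici_subset_Ici.2 hij)
          (fun x _ _ => ht x)
      · intro i
        rw [hLapp]
        exact Finset.sum_nonneg fun j _ => ht j
  -- the composed integrand
  have hcomp : ∀ t : Fin n → ℝ, f (L t) = ∏ j, Real.exp (-(K j) * t j) := by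
    intro t
    have hfL : f (L t) = ∏ i, Real.exp (-k i * L t i) := rfl
    rw [hfL, ← Real.exp_sum, ← Real.exp_sum]
    congr 1
    have : ∀ i, -k i * L t i = ∑ j ∈ Finset.Ici i, -k i * t j := by
      intro i; rw [hLapp, Finset.mul_sum]
    simp_rw [this]
    rw [Finset.sum_comm' (t' := Finset.univ) (s' := fun j => Finset.Iic j)
      (by intro i j; simp [Finset.mem_Ici, Finset.mem_Iic])]
    refine Finset.sum_congr rfl fun j _ => ?_
    rw [← Finset.sum_mul]
    congr 1
    simp [hKdef, Finset.sum_neg_distrib]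
  -- the product of indicators
  set g : Fin n → ℝ → ℝ :=
    fun j => (Set.Ici (0 : ℝ)).indicator (fun x => Real.exp (-(K j) * x)) with hgdef
  have hg_int : ∀ j, Integrable (g j) := by
    intro j
    rw [hgdef]
    rw [integrable_indicator_iff measurableSet_Ici]
    rw [integrableOn_Ici_iff_integrableOn_Ioi]
    simpa using exp_neg_integrableOn_Ioi 0 (hKpos j)
  have hg_val : ∀ j, ∫ x, g j x = (K j)⁻¹ := by
    intro j
    rw [hgdef]
    rw [integral_indicator measurableSet_Ici, integral_Ici_eq_integral_Ioi]
    simp_rw [neg_mul]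
    exact integral_exp_neg_mul_Ioi_zero (hKpos j)
  set F : (Fin n → ℝ) → ℝ := fun t => ∏ j, g j (t j) with hFdef
  have hF_eq : ∀ t, (orderedCone n).indicator f (L t) = F t := by
    intro t
    by_cases ht : ∀ j, 0 ≤ t j
    · rw [Set.indicator_of_mem ((hpre t).2 ht), hcomp t, hFdef]
      exact Finset.prod_congr rfl fun j _ =>
        (Set.indicator_of_mem (Set.mem_Ici.2 (ht j))
          (fun x => Real.exp (-K j * x))).symm
    · push_neg at ht
      obtain ⟨j0, hj0⟩ := ht
      rw [Set.indicator_of_notMem (fun hmem => hj0.not_ge ((hpre t).1 hmem j0))]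
      rw [hFdef]
      symm
      refine Finset.prod_eq_zero (Finset.mem_univ j0) ?_
      exact Set.indicator_of_notMem (by simpa using hj0.not_ge) _
  have hFint : Integrable F := Integrable.fintype_prod_dep hg_int
  have hFval : ∫ t, F t = ∏ j, (K j)⁻¹ := by
    rw [hFdef, integral_fintype_prod_volume_eq_prod g]
    exact Finset.prod_congr rfl fun j _ => hg_val j
  have hmc := orderedCone_measurableSet n
  have hind_int : Integrable ((orderedCone n).indicator f) := by
    rw [← hmp.integrable_comp_emb hemb]
    have : ((orderedCone n).indicator f) ∘ ⇑L = F := funext hF_eq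
    rw [this]
    exact hFint
  constructor
  · exact (integrable_indicator_iff hmc).1 hind_int
  · calc ∫ s in orderedCone n, f s = ∫ s, (orderedCone n).indicator f s := by
          rw [integral_indicator hmc]
      _ = ∫ t, (orderedCone n).indicator f (L t) := by
          rw [hmp.integral_comp hemb]
      _ = ∫ t, F t := by simp_rw [hF_eq]
      _ = ∏ j, (K j)⁻¹ := hFval
      _ = 1 / ∏ j : Fin n, ∑ i ∈ Finset.Iic j, k i := by
          rw [one_div, ← Finset.prod_inv_distrib]

end
end
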